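/- Let 2 ≤ k ≤ s. If w_{k−1} − w_k ≤ t_{k−1} − t_k (equivalently w_k − w_{k−1} ≥ t_k − t_{k−1}), then I_{t_{k−1}}(L_{k−1}) ⊆ I_{t_k}(L_k): every t_{k−1}×t_{k−1} minor of X with entries in L_{k−1} is a K[L]-linear combination of minors of size at least t_k with entries in L_k (obtained by Laplace expansion along the columns of index greater than w_k). -/

import Mathlib

open MvPolynomial

/-- A symmetric ladder inside the `n × n` grid `{1,…,n} × {1,…,n}`. -/
def IsLadder (n : ℕ) (Λ : Set (ℕ × ℕ)) : Prop :=
  (∀ p ∈ Λ, 1 ≤ p.1 ∧ p.1 ≤ n ∧ 1 ≤ p.2 ∧ p.2 ≤ n) ∧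
  (∀ p ∈ Λ, (p.2, p.1) ∈ Λ) ∧
  (∀ i j h k : ℕ, i < h → k < j → (i, j) ∈ Λ → (h, k) ∈ Λ →
    (i, k) ∈ Λ ∧ (i, h) ∈ Λ ∧ (h, j) ∈ Λ ∧ (j, k) ∈ Λ)

/-- `𝓛⁺`, the part of the ladder on or above the diagonal. -/
def ladderPlus (Λ : Set (ℕ × ℕ)) : Set (ℕ × ℕ) := {p ∈ Λ | p.1 ≤ p.2}

/-- The variable of `MvPolynomial ↥σ K` attached to a position `p` (or `0` if `p ∉ σ`). -/
noncomputable def xvar (K : Type*) [Field K] (σ : Set (ℕ × ℕ)) (p : ℕ × ℕ) :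
    MvPolynomial ↥σ K :=
  letI := Classical.dec (p ∈ σ)
  if h : p ∈ σ then X ⟨p, h⟩ else 0

/-- The `(i,j)` entry of the generic symmetric matrix, as an element of `K[L]`:
the variable attached to the sorted pair. -/
noncomputable def ladderEntry (K : Type*) [Field K] (Λ : Set (ℕ × ℕ)) (i j : ℕ) :
    MvPolynomial ↥(ladderPlus Λ) K := xvar K (ladderPlus Λ) (min i j, max i j)

/-- `I_t(S)`: the ideal of `K[L]` generated by the `t × t` minors of the generic
symmetric matrix all of whose entries lie in the set of positions `S`
(positions are recorded as sorted pairs). -/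
noncomputable def minorIdeal (K : Type*) [Field K] (Λ : Set (ℕ × ℕ)) (S : Set (ℕ × ℕ))
    (t : ℕ) : Ideal (MvPolynomial ↥(ladderPlus Λ) K) :=
  Ideal.span { f | ∃ α β : Fin t → ℕ, StrictMono α ∧ StrictMono β ∧
    (∀ p q, (min (α p) (β q), max (α p) (β q)) ∈ S) ∧
    f = (Matrix.of fun p q => ladderEntry K Λ (α p) (β q)).det }

/-- The region `T⁺_{(c,d)} = {(i,j) ∈ T⁺ : i ≤ c, j ≤ d}` of a (symmetric) ladder `T`. -/
def region (T : Set (ℕ × ℕ)) (c d : ℕ) : Set (ℕ × ℕ) :=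
  {p ∈ ladderPlus T | p.1 ≤ c ∧ p.2 ≤ d}

/-- The symmetric mixed ladder determinantal ideal
`I_t(L) = I_{t 1}(L_{(v 1, w 1)}) + … + I_{t s}(L_{(v s, w s)}) ⊆ K[L]`. -/
noncomputable def mixedLadderIdeal (K : Type*) [Field K] (Λ : Set (ℕ × ℕ)) (s : ℕ)
    (v w t : ℕ → ℕ) : Ideal (MvPolynomial ↥(ladderPlus Λ) K) :=
  ∑ k ∈ Finset.Icc 1 s, minorIdeal K Λ (region Λ (v k) (w k)) (t k)

/-- The data of distinguished points `(v 1, w 1),…,(v s, w s)`: points of the upper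
border of `𝓛⁺` containing all upper outside corners, with `v` increasing and `w`
decreasing. -/
def DistinguishedPoints (Λ : Set (ℕ × ℕ)) (s : ℕ) (v w : ℕ → ℕ) : Prop :=
  1 ≤ s ∧
  (∀ k, 1 ≤ k → k ≤ s → (v k, w k) ∈ ladderPlus Λ ∧ (v k + 1, w k + 1) ∉ ladderPlus Λ) ∧
  (∀ c d : ℕ, (c, d) ∈ ladderPlus Λ → (c + 1, d + 1) ∉ ladderPlus Λ →
    (c + 1, d) ∉ Λ → (c, d + 1) ∉ Λ → ∃ k, 1 ≤ k ∧ k ≤ s ∧ v k = c ∧ w k = d) ∧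
  (∀ k l, 1 ≤ k → k ≤ l → l ≤ s → v k ≤ v l ∧ w l ≤ w k)

/-!
Let `M` be a `t_{k-1}`-minor with entries in `L_{k-1}`. Every entry `x_{ij}`, `i ≤ j`, of `L_{k-1}` has
`i ≤ v_{k-1}`, so either all row indices or all column indices of `M` are at most `v_{k-1} ≤ v_k`;
by symmetry of `X` we may assume it is the rows. The column indices increase strictly up to at most
`w_{k-1}`, so the hypothesis `w_{k-1} - w_k ≤ t_{k-1} - t_k` forces the first `t_k` of them to be at
most `w_k`. Laplace expansion along the remaining columns writes `M` as a combination of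
`t_k`-minors on those first columns, and these have entries in `L_k` because `v_k ≤ w_k`.
-/

open Finset

lemma StrictMono.apply_add_le_of_forall_le {T d : ℕ} {f : Fin T → ℕ} (hf : StrictMono f)
    (hle : ∀ j, f j ≤ d) (q : Fin T) : f q + (T - q) ≤ d + 1 := by
  have hcard : #(Ici q) ≤ #(Icc (f q) d) :=
    card_le_card_of_injOn f (fun j hj => by simpa using ⟨hf.monotone (mem_Ici.mp hj), hle j⟩)
      hf.injective.injOn
  rw [Fin.card_Ici, Nat.card_Icc] at hcard
  omega

section Minors

variable {K : Type*} [Field K] (Λ : Set (ℕ × ℕ))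

lemma ladderEntry_comm (i j : ℕ) : ladderEntry K Λ i j = ladderEntry K Λ j i := by
  rw [ladderEntry, ladderEntry, min_comm, max_comm]

lemma det_ladderEntry_comm {T : ℕ} (α β : Fin T → ℕ) :
    (Matrix.of fun p q => ladderEntry K Λ (α p) (β q)).det =
      (Matrix.of fun p q => ladderEntry K Λ (β p) (α q)).det := by
  rw [← Matrix.det_transpose]
  exact congrArg Matrix.det (Matrix.ext fun _ _ => ladderEntry_comm Λ _ _)

lemma det_mem_minorIdeal_of_leading_columns (S : Set (ℕ × ℕ)) {t₀ T : ℕ} (hT : t₀ ≤ T)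
    {α β : Fin T → ℕ} (hα : StrictMono α) (hβ : StrictMono β)
    (hS : ∀ p (q : Fin T), (q : ℕ) < t₀ → (min (α p) (β q), max (α p) (β q)) ∈ S) :
    (Matrix.of fun p q => ladderEntry K Λ (α p) (β q)).det ∈ minorIdeal K Λ S t₀ := by
  induction T, hT using Nat.le_induction with
  | base => exact Ideal.subset_span ⟨α, β, hα, hβ, fun p q => hS p q q.isLt, rfl⟩
  | succ T _ ih =>
    rw [Matrix.det_succ_column _ (Fin.last T)]
    refine Ideal.sum_mem _ fun i _ => Ideal.mul_mem_left _ _ ?_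
    rw [Fin.succAbove_last]
    exact ih (hα.comp (Fin.strictMono_succAbove i)) (hβ.comp Fin.strictMono_castSucc)
      fun p q hq => hS _ q.castSucc hq

lemma det_mem_minorIdeal_region {c d d' t₀ T : ℕ} (hcd : c ≤ d) (hdd' : d ≤ d')
    (hT : (d' : ℤ) - d ≤ (T : ℤ) - t₀) {α β : Fin T → ℕ} (hα : StrictMono α) (hβ : StrictMono β)
    (hΛ : ∀ p q, (min (α p) (β q), max (α p) (β q)) ∈ ladderPlus Λ)
    (hαc : ∀ p, α p ≤ c) (hβd' : ∀ q, β q ≤ d') :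
    (Matrix.of fun p q => ladderEntry K Λ (α p) (β q)).det ∈
      minorIdeal K Λ (region Λ c d) t₀ := by
  refine det_mem_minorIdeal_of_leading_columns Λ _ (by omega) hα hβ fun p q hq => ?_
  have hβd : β q ≤ d := by have := hβ.apply_add_le_of_forall_le hβd' q; omega
  exact ⟨hΛ p q, (min_le_left _ _).trans (hαc p), max_le ((hαc p).trans hcd) hβd⟩

end Minors

theorem statement7_general {K : Type*} [Field K]
    (Λ : Set (ℕ × ℕ))
    (s : ℕ) (v w t : ℕ → ℕ) (hd : DistinguishedPoints Λ s v w)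
    (k : ℕ) (hk2 : 2 ≤ k) (hks : k ≤ s)
    (hwt : (w (k - 1) : ℤ) - w k ≤ (t (k - 1) : ℤ) - t k) :
    minorIdeal K Λ (region Λ (v (k - 1)) (w (k - 1))) (t (k - 1)) ≤
      minorIdeal K Λ (region Λ (v k) (w k)) (t k) := by
  obtain ⟨-, hborder, -, hmono⟩ := hd
  obtain ⟨hv, hw⟩ := hmono (k - 1) k (by omega) (by omega) hks
  have hvw : v k ≤ w k := (hborder k (by omega) hks).1.2
  rw [minorIdeal, Ideal.span_le]
  rintro _ ⟨α, β, hα, hβ, hS, rfl⟩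
  have hΛ p q := (hS p q).1
  by_cases hrows : ∀ p, α p ≤ v (k - 1)
  · exact det_mem_minorIdeal_region Λ hvw hw hwt hα hβ hΛ (fun p => (hrows p).trans hv)
      fun q => (le_max_right _ _).trans (hS q q).2.2
  · obtain ⟨p₀, hp₀⟩ := not_forall.mp hrows
    have hcols q : β q ≤ v (k - 1) := by have := (hS p₀ q).2.1; omega
    rw [SetLike.mem_coe, det_ladderEntry_comm]
    exact det_mem_minorIdeal_region Λ hvw hw hwt hβ hα
      (fun p q => by simpa only [min_comm, max_comm] using hΛ q p)
      (fun p => (hcols p).trans hv) fun q => (le_max_left _ _).trans (hS q q).2.2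

theorem statement7 {K : Type*} [Field K] [IsAlgClosed K] (n : ℕ) (hn : 1 ≤ n)
    (Λ : Set (ℕ × ℕ)) (hΛ : IsLadder n Λ)
    (s : ℕ) (v w t : ℕ → ℕ) (hd : DistinguishedPoints Λ s v w)
    (ht : ∀ l, 1 ≤ l → l ≤ s → 1 ≤ t l)
    (k : ℕ) (hk2 : 2 ≤ k) (hks : k ≤ s)
    (hwt : (w (k - 1) : ℤ) - w k ≤ (t (k - 1) : ℤ) - t k) :
    minorIdeal K Λ (region Λ (v (k - 1)) (w (k - 1))) (t (k - 1)) ≤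
      minorIdeal K Λ (region Λ (v k) (w k)) (t k) :=
  statement7_general Λ s v w t hd k hk2 hks hwt
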